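/- For every d ∈ [0,1] and every real L, if C_m(d)/m converges to L as m → ∞, then for every integer n ≥ 1, L ≤ C_n(d)/n. (That is, the capacity of the binary deletion channel is at most (1/n)·C_n(d) for every n.) -/

import Mathlib

open Finset

/-- Mutual information of a joint distribution `q` on `α × β`, where the output
marginal is supported inside the finite set `Ys`. Terms with zero joint
probability vanish since they are multiplied by `q x y = 0`. -/
noncomputable def MI {α : Type*} [Fintype α] {β : Type*} [DecidableEq β]
    (q : α → β → ℝ) (Ys : Finset β) : ℝ :=
  ∑ x : α, ∑ y ∈ Ys, q x y *
    Real.logb 2 (q x y / ((∑ y' ∈ Ys, q x y') * (∑ x' : α, q x' y)))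

/-- `p` is a probability distribution on the finite type `α`. -/
def IsDist {α : Type*} [Fintype α] (p : α → ℝ) : Prop :=
  (∀ a, 0 ≤ p a) ∧ ∑ a : α, p a = 1

/-- The subsequence of `x` obtained by keeping exactly the positions in `S`. -/
def delOutput {n : ℕ} (x : Fin n → Bool) (S : Finset (Fin n)) : List Bool :=
  (S.sort (· ≤ ·)).map x

/-- All binary strings of length at most `n`. -/
def listsUpTo (n : ℕ) : Finset (List Bool) :=
  (Finset.range (n + 1)).biUnion
    (fun k => Finset.image (fun v : Fin k → Bool => List.ofFn v) Finset.univ)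

/-- Transition probability of the binary deletion channel `W_n^d`:
each bit is deleted independently with probability `d`. -/
noncomputable def Wdel (n : ℕ) (d : ℝ) (x : Fin n → Bool) (y : List Bool) : ℝ :=
  ∑ S : Finset (Fin n),
    if delOutput x S = y then (1 - d) ^ S.card * d ^ (n - S.card) else 0

/-- `C_n(d)`: the supremum of `I(X;Y)` over input distributions on `{0,1}^n`,
where `Y` is the output of the deletion channel `W_n^d` on input `X`. -/
noncomputable def Cdel (n : ℕ) (d : ℝ) : ℝ :=
  sSup { r | ∃ p : (Fin n → Bool) → ℝ, IsDist p ∧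
    r = MI (fun x y => p x * Wdel n d x y) (listsUpTo n) }

/-!
`C_n(d)` is subadditive in `n`, so Fekete's argument gives `L ≤ C_n(d)/n`.

For subadditivity, feed a block `X` of length `a + b` with halves `X₁, X₂`: the deletion
channel acts on the halves independently and outputs `Y = Y₁ ++ Y₂`. Since `Y` is a function
of `(Y₁, Y₂)`, and since `I(X; Y) ≤ D(W ‖ r | p)` for every output distribution `r`, taking
for `r` the law of `Y₁ ++ Y₂` when `Y₁`, `Y₂` are made independent gives, through the log-sum
inequality, `I(X; Y) ≤ I(X₁; Y₁) + I(X₂; Y₂) ≤ C_a(d) + C_b(d)`.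
-/

open Real

section LogSum

lemma sub_le_mul_log_div {a c : ℝ} (ha : 0 ≤ a) (hc : 0 ≤ c) (hac : c = 0 → a = 0) :
    a - c ≤ a * log (a / c) := by
  rcases ha.eq_or_lt with rfl | ha
  · simpa using hc
  have hc : 0 < c := hc.lt_of_ne fun h => ha.ne' (hac h.symm)
  have h := one_sub_inv_le_log_of_pos (div_pos ha hc)
  rw [inv_div] at h
  calc a - c = a * (1 - c / a) := by field_simp
    _ ≤ a * log (a / c) := mul_le_mul_of_nonneg_left h ha.le

variable {ι : Type*} {s : Finset ι} {a b : ι → ℝ}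

theorem sum_mul_log_div_sum_le (ha : ∀ i ∈ s, 0 ≤ a i) (hb : ∀ i ∈ s, 0 ≤ b i)
    (hab : ∀ i ∈ s, b i = 0 → a i = 0) :
    (∑ i ∈ s, a i) * log ((∑ i ∈ s, a i) / ∑ i ∈ s, b i) ≤ ∑ i ∈ s, a i * log (a i / b i) := by
  set A := ∑ i ∈ s, a i
  set B := ∑ i ∈ s, b i
  rcases (sum_nonneg ha).eq_or_lt with hA | hA
  · rw [show A = 0 from hA.symm, zero_mul]
    exact sum_nonneg fun i hi => by simp [(sum_eq_zero_iff_of_nonneg ha).1 hA.symm i hi]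
  obtain ⟨j, hj, haj⟩ := exists_ne_zero_of_sum_ne_zero hA.ne'
  have hB : 0 < B := ((hb j hj).lt_of_ne fun h => haj (hab j hj h.symm)).trans_le
    (single_le_sum hb hj)
  -- log-sum reduces to `a - c ≤ a log (a / c)` for `c = b · A / B`, whose sum vanishes
  have key : ∀ i ∈ s, a i - b i * (A / B) ≤ a i * log (a i / b i) - a i * log (A / B) := by
    intro i hi
    have hc : b i * (A / B) = 0 → a i = 0 := fun h =>
      hab i hi ((mul_eq_zero.1 h).resolve_right (by positivity))
    refine (sub_le_mul_log_div (ha i hi) (by have := hb i hi; positivity) hc).trans_eq ?_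
    rcases (ha i hi).eq_or_lt with h0 | hpos
    · simp [← h0]
    have hbi : b i ≠ 0 := fun h => hpos.ne' (hab i hi h)
    rw [← div_div, log_div (div_ne_zero hpos.ne' hbi) (by positivity), mul_sub]
  have hsum := sum_le_sum key
  rw [sum_sub_distrib, sum_sub_distrib, ← sum_mul, ← sum_mul] at hsum
  change A - B * (A / B) ≤ _ - A * log (A / B) at hsum
  rw [mul_div_cancel₀ _ hB.ne', sub_self] at hsum
  linarith

theorem sum_mul_logb_div_sum_le {c : ℝ} (hc : 1 ≤ c) (ha : ∀ i ∈ s, 0 ≤ a i)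
    (hb : ∀ i ∈ s, 0 ≤ b i) (hab : ∀ i ∈ s, b i = 0 → a i = 0) :
    (∑ i ∈ s, a i) * logb c ((∑ i ∈ s, a i) / ∑ i ∈ s, b i) ≤
      ∑ i ∈ s, a i * logb c (a i / b i) := by
  simp only [logb, mul_div_assoc', ← Finset.sum_div]
  exact div_le_div_of_nonneg_right (sum_mul_log_div_sum_le ha hb hab) (log_nonneg hc)

end LogSum

theorem Subadditive.le_div_of_tendsto {u : ℕ → ℝ} (hu : Subadditive u) {L : ℝ}
    (hL : Filter.Tendsto (fun n => u n / n) Filter.atTop (nhds L)) {n : ℕ} (hn : n ≠ 0) :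
    L ≤ u n / n :=
  le_of_forall_gt_imp_ge_of_dense fun _ hc =>
    le_of_tendsto hL ((hu.eventually_div_lt_of_div_lt hn hc).mono fun _ => le_of_lt)

section Channel

variable {α β : Type*}

def IsChannel (W : α → β → ℝ) (Ys : Finset β) : Prop :=
  (∀ x y, 0 ≤ W x y) ∧ ∀ x, ∑ y ∈ Ys, W x y = 1

lemma IsChannel.le_one {W : α → β → ℝ} {Ys : Finset β} (hW : IsChannel W Ys) {x : α} {y : β}
    (hy : y ∈ Ys) : W x y ≤ 1 :=
  hW.2 x ▸ single_le_sum (fun y _ => hW.1 x y) hy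

variable [Fintype α]

def outDist (p : α → ℝ) (W : α → β → ℝ) (y : β) : ℝ :=
  ∑ x, p x * W x y

/-- The conditional relative entropy `D(W ‖ r | p)`. -/
noncomputable def condDiv (p : α → ℝ) (W : α → β → ℝ) (r : β → ℝ) (Ys : Finset β) : ℝ :=
  ∑ x, ∑ y ∈ Ys, p x * W x y * logb 2 (W x y / r y)

variable {p : α → ℝ} {W : α → β → ℝ} {Ys : Finset β}

lemma outDist_nonneg (hp : ∀ x, 0 ≤ p x) (hW : ∀ x y, 0 ≤ W x y) (y : β) :
    0 ≤ outDist p W y :=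
  sum_nonneg fun x _ => mul_nonneg (hp x) (hW x y)

lemma mul_le_outDist (hp : ∀ x, 0 ≤ p x) (hW : ∀ x y, 0 ≤ W x y) (x : α) (y : β) :
    p x * W x y ≤ outDist p W y :=
  single_le_sum (f := fun x => p x * W x y) (fun x _ => mul_nonneg (hp x) (hW x y)) (mem_univ x)

lemma sum_outDist (hp : IsDist p) (hW : IsChannel W Ys) : ∑ y ∈ Ys, outDist p W y = 1 := by
  simp only [outDist]
  rw [sum_comm]
  simp [← mul_sum, hW.2, hp.2]

lemma MI_eq_condDiv [DecidableEq β] (hW : ∀ x, ∑ y ∈ Ys, W x y = 1) :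
    MI (fun x y => p x * W x y) Ys = condDiv p W (outDist p W) Ys := by
  refine sum_congr rfl fun x _ => sum_congr rfl fun y _ => ?_
  rw [← mul_sum, hW x, mul_one]
  rcases eq_or_ne (p x) 0 with hpx | hpx
  · simp [hpx]
  · rw [outDist, mul_div_mul_left _ _ hpx]

lemma condDiv_eq_add (hp : ∀ x, 0 ≤ p x) (hW : ∀ x y, 0 ≤ W x y) {r : β → ℝ}
    (hout : ∀ y ∈ Ys, r y = 0 → outDist p W y = 0) :
    condDiv p W r Ys = condDiv p W (outDist p W) Ys +
      ∑ y ∈ Ys, outDist p W y * logb 2 (outDist p W y / r y) := by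
  have hterm : ∀ x, ∀ y ∈ Ys, p x * W x y * logb 2 (W x y / r y) =
      p x * W x y * logb 2 (W x y / outDist p W y) +
        p x * W x y * logb 2 (outDist p W y / r y) := by
    intro x y hy
    rcases (mul_nonneg (hp x) (hW x y)).eq_or_lt with h0 | hpos
    · simp [← h0]
    have hWxy : W x y ≠ 0 := fun h => hpos.ne' (by simp [h])
    have hout_pos := hpos.trans_le (mul_le_outDist hp hW x y)
    have hr : r y ≠ 0 := fun h => hout_pos.ne' (hout y hy h)
    rw [logb_div hWxy hr, logb_div hWxy hout_pos.ne', logb_div hout_pos.ne' hr]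
    ring
  simp only [condDiv]
  rw [sum_congr rfl fun x _ => sum_congr rfl (hterm x)]
  simp only [sum_add_distrib]
  congr 1
  rw [sum_comm]
  exact sum_congr rfl fun y _ => (sum_mul _ _ _).symm

lemma MI_le_condDiv [DecidableEq β] (hp : IsDist p) (hW : IsChannel W Ys) {r : β → ℝ}
    (hr : ∀ y ∈ Ys, 0 ≤ r y) (hr1 : ∑ y ∈ Ys, r y ≤ 1)
    (hout : ∀ y ∈ Ys, r y = 0 → outDist p W y = 0) :
    MI (fun x y => p x * W x y) Ys ≤ condDiv p W r Ys := by
  have gibbs : 0 ≤ ∑ y ∈ Ys, outDist p W y * logb 2 (outDist p W y / r y) := by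
    refine le_trans ?_ (sum_mul_logb_div_sum_le one_le_two
      (fun y _ => outDist_nonneg hp.1 hW.1 y) hr hout)
    rw [sum_outDist hp hW, one_mul]
    rcases (sum_nonneg hr).eq_or_lt with h0 | hpos
    · simp [← h0]
    · exact logb_nonneg one_lt_two ((one_le_div hpos).2 hr1)
  rw [MI_eq_condDiv hW.2, condDiv_eq_add hp.1 hW.1 hout]
  linarith

lemma MI_le_logb_card [DecidableEq β] (hp : IsDist p) (hW : IsChannel W Ys) :
    MI (fun x y => p x * W x y) Ys ≤ logb 2 #Ys := by
  have hr1 : ∑ _y ∈ Ys, (#Ys : ℝ)⁻¹ ≤ 1 := by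
    rw [sum_const, nsmul_eq_mul]
    exact mul_inv_le_one
  have hout : ∀ y ∈ Ys, (#Ys : ℝ)⁻¹ = 0 → outDist p W y = 0 := fun y hy h => by
    simp [card_ne_zero_of_mem hy] at h
  have hterm : ∀ x, ∀ y ∈ Ys, p x * W x y * logb 2 (W x y / (#Ys : ℝ)⁻¹) ≤
      p x * W x y * logb 2 #Ys := by
    intro x y hy
    rcases (hW.1 x y).eq_or_lt with h0 | hpos
    · simp [← h0]
    have hcard : (0 : ℝ) < #Ys := by exact_mod_cast card_pos.2 ⟨y, hy⟩
    refine mul_le_mul_of_nonneg_left ?_ (mul_nonneg (hp.1 x) hpos.le)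
    rw [div_inv_eq_mul]
    exact logb_le_logb_of_le one_lt_two (by positivity)
      (mul_le_of_le_one_left hcard.le (hW.le_one hy))
  calc MI (fun x y => p x * W x y) Ys ≤ condDiv p W (fun _ => (#Ys : ℝ)⁻¹) Ys :=
        MI_le_condDiv hp hW (fun _ _ => by positivity) hr1 hout
    _ ≤ ∑ x, ∑ y ∈ Ys, p x * W x y * logb 2 #Ys := sum_le_sum fun x _ => sum_le_sum (hterm x)
    _ = logb 2 #Ys := by simp [← sum_mul, ← mul_sum, hW.2, hp.2]

end Channel

section DataProcessing

variable {α β γ : Type*} [Fintype α] [DecidableEq β] {p : α → ℝ} {Ys : Finset β}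
  {V : α → γ → ℝ} {Zs : Finset γ} {f : γ → β} {r : γ → ℝ}

lemma condDiv_fiberwise_le (hp : ∀ x, 0 ≤ p x) (hV : ∀ x z, 0 ≤ V x z)
    (hr : ∀ z ∈ Zs, 0 ≤ r z) (hVr : ∀ x, ∀ z ∈ Zs, r z = 0 → p x * V x z = 0)
    (hf : ∀ z ∈ Zs, f z ∈ Ys) :
    condDiv p (fun x y => ∑ z ∈ Zs with f z = y, V x z)
      (fun y => ∑ z ∈ Zs with f z = y, r z) Ys ≤ condDiv p V r Zs := by
  refine sum_le_sum fun x _ => ?_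
  rw [← sum_fiberwise_of_maps_to hf]
  refine sum_le_sum fun y _ => ?_
  have hsum := sum_mul_logb_div_sum_le one_le_two (s := {z ∈ Zs | f z = y})
    (a := fun z => p x * V x z) (b := fun z => p x * r z)
    (fun z _ => mul_nonneg (hp x) (hV x z))
    (fun z hz => mul_nonneg (hp x) (hr z (mem_filter.1 hz).1))
    (fun z hz h => (mul_eq_zero.1 h).elim (fun h => by simp [h])
      (hVr x z (mem_filter.1 hz).1))
  rcases eq_or_ne (p x) 0 with hpx | hpx
  · simp [hpx]
  · simpa only [← mul_sum, mul_div_mul_left _ _ hpx] using hsum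

theorem MI_le_condDiv_of_fiberwise (hp : IsDist p) (hV : IsChannel V Zs)
    (hf : ∀ z ∈ Zs, f z ∈ Ys) (hr : ∀ z ∈ Zs, 0 ≤ r z) (hr1 : ∑ z ∈ Zs, r z ≤ 1)
    (hVr : ∀ x, ∀ z ∈ Zs, r z = 0 → p x * V x z = 0) :
    MI (fun x y => p x * ∑ z ∈ Zs with f z = y, V x z) Ys ≤ condDiv p V r Zs := by
  have hW : IsChannel (fun x y => ∑ z ∈ Zs with f z = y, V x z) Ys :=
    ⟨fun x y => sum_nonneg fun z _ => hV.1 x z,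
      fun x => (sum_fiberwise_of_maps_to hf _).trans (hV.2 x)⟩
  have hout : ∀ y ∈ Ys, ∑ z ∈ Zs with f z = y, r z = 0 →
      outDist p (fun x y => ∑ z ∈ Zs with f z = y, V x z) y = 0 := by
    intro y _ h
    rw [sum_eq_zero_iff_of_nonneg fun z hz => hr z (mem_filter.1 hz).1] at h
    refine sum_eq_zero fun x _ => ?_
    rw [mul_sum]
    exact sum_eq_zero fun z hz => hVr x z (mem_filter.1 hz).1 (h z hz)
  refine (MI_le_condDiv hp hW (fun y _ => sum_nonneg fun z hz => hr z (mem_filter.1 hz).1)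
    ?_ hout).trans (condDiv_fiberwise_le hp.1 hV.1 hr hVr hf)
  rwa [sum_fiberwise_of_maps_to hf]

end DataProcessing

section Marginal

variable {α α' β : Type*} [Fintype α] [Fintype α'] [DecidableEq α'] {p : α → ℝ}

def mapDist (g : α → α') (p : α → ℝ) (u : α') : ℝ :=
  ∑ x with g x = u, p x

lemma sum_mapDist_mul (g : α → α') (F : α' → ℝ) :
    ∑ u, mapDist g p u * F u = ∑ x, p x * F (g x) := by
  simp only [mapDist, sum_mul]
  rw [← sum_fiberwise univ g]
  exact sum_congr rfl fun u _ => sum_congr rfl fun x hx => by rw [(mem_filter.1 hx).2]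

lemma IsDist.mapDist (hp : IsDist p) (g : α → α') : IsDist (mapDist g p) :=
  ⟨fun _ => sum_nonneg fun x _ => hp.1 x, by simpa [hp.2] using sum_mapDist_mul (p := p) g 1⟩

lemma outDist_mapDist (g : α → α') (W : α' → β → ℝ) (y : β) :
    outDist (mapDist g p) W y = ∑ x, p x * W (g x) y :=
  sum_mapDist_mul g fun u => W u y

lemma mul_le_outDist_mapDist (hp : ∀ x, 0 ≤ p x) {W : α' → β → ℝ} (hW : ∀ u y, 0 ≤ W u y)
    (g : α → α') (x : α) (y : β) : p x * W (g x) y ≤ outDist (mapDist g p) W y :=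
  outDist_mapDist (p := p) g W y ▸ mul_le_outDist hp (fun x y => hW (g x) y) x y

lemma condDiv_mapDist (g : α → α') (W : α' → β → ℝ) (r : β → ℝ) (Ys : Finset β) :
    condDiv (mapDist g p) W r Ys = ∑ x, ∑ y ∈ Ys, p x * W (g x) y * logb 2 (W (g x) y / r y) := by
  simp only [condDiv, mul_assoc, ← mul_sum]
  exact sum_mapDist_mul g _

end Marginal

section Product

variable {α α₁ α₂ β₁ β₂ : Type*} {W₁ : α₁ → β₁ → ℝ} {W₂ : α₂ → β₂ → ℝ}
  {Y₁ : Finset β₁} {Y₂ : Finset β₂}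

lemma IsChannel.prod (hW₁ : IsChannel W₁ Y₁) (hW₂ : IsChannel W₂ Y₂) (g₁ : α → α₁)
    (g₂ : α → α₂) :
    IsChannel (fun x z => W₁ (g₁ x) z.1 * W₂ (g₂ x) z.2) (Y₁ ×ˢ Y₂) :=
  ⟨fun _ _ => mul_nonneg (hW₁.1 _ _) (hW₂.1 _ _), fun x => by
    rw [sum_product, ← sum_mul_sum, hW₁.2, hW₂.2, one_mul]⟩

variable [Fintype α] [Fintype α₁] [Fintype α₂] [DecidableEq α₁] [DecidableEq α₂]
  [DecidableEq β₁] [DecidableEq β₂] {p : α → ℝ}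

lemma condDiv_prod_eq (hp : ∀ x, 0 ≤ p x) (hW₁ : IsChannel W₁ Y₁) (hW₂ : IsChannel W₂ Y₂)
    (g₁ : α → α₁) (g₂ : α → α₂) :
    condDiv p (fun x z => W₁ (g₁ x) z.1 * W₂ (g₂ x) z.2)
        (fun z => outDist (mapDist g₁ p) W₁ z.1 * outDist (mapDist g₂ p) W₂ z.2) (Y₁ ×ˢ Y₂) =
      MI (fun u y => mapDist g₁ p u * W₁ u y) Y₁ + MI (fun v y => mapDist g₂ p v * W₂ v y) Y₂ := by
  set s₁ := outDist (mapDist g₁ p) W₁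
  set s₂ := outDist (mapDist g₂ p) W₂
  have hterm : ∀ x z₁ z₂, p x * (W₁ (g₁ x) z₁ * W₂ (g₂ x) z₂) *
      logb 2 (W₁ (g₁ x) z₁ * W₂ (g₂ x) z₂ / (s₁ z₁ * s₂ z₂)) =
      p x * W₁ (g₁ x) z₁ * logb 2 (W₁ (g₁ x) z₁ / s₁ z₁) * W₂ (g₂ x) z₂ +
        p x * W₂ (g₂ x) z₂ * logb 2 (W₂ (g₂ x) z₂ / s₂ z₂) * W₁ (g₁ x) z₁ := by
    intro x z₁ z₂
    rcases (hp x).eq_or_lt with h | hpx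
    · simp [← h]
    rcases (hW₁.1 (g₁ x) z₁).eq_or_lt with h | h₁
    · simp [← h]
    rcases (hW₂.1 (g₂ x) z₂).eq_or_lt with h | h₂
    · simp [← h]
    have hs₁ := (mul_pos hpx h₁).trans_le (mul_le_outDist_mapDist hp hW₁.1 g₁ x z₁)
    have hs₂ := (mul_pos hpx h₂).trans_le (mul_le_outDist_mapDist hp hW₂.1 g₂ x z₂)
    rw [mul_div_mul_comm, logb_mul (by positivity) (by positivity)]
    ring
  rw [MI_eq_condDiv hW₁.2, MI_eq_condDiv hW₂.2, condDiv_mapDist, condDiv_mapDist]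
  unfold condDiv
  rw [← sum_add_distrib]
  refine sum_congr rfl fun x _ => ?_
  rw [sum_product]
  simp only [hterm, sum_add_distrib, ← mul_sum, hW₂.2, mul_one]
  rw [sum_comm]
  simp only [← mul_sum, hW₁.2, mul_one]
  rfl

theorem MI_le_add_of_fiberwise_prod {β : Type*} [DecidableEq β] {Ys : Finset β} (hp : IsDist p)
    (hW₁ : IsChannel W₁ Y₁) (hW₂ : IsChannel W₂ Y₂) (g₁ : α → α₁) (g₂ : α → α₂)
    {f : β₁ × β₂ → β} (hf : ∀ z ∈ Y₁ ×ˢ Y₂, f z ∈ Ys) :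
    MI (fun x y => p x * ∑ z ∈ Y₁ ×ˢ Y₂ with f z = y, W₁ (g₁ x) z.1 * W₂ (g₂ x) z.2) Ys ≤
      MI (fun u y => mapDist g₁ p u * W₁ u y) Y₁ + MI (fun v y => mapDist g₂ p v * W₂ v y) Y₂ := by
  rw [← condDiv_prod_eq hp.1 hW₁ hW₂ g₁ g₂]
  refine MI_le_condDiv_of_fiberwise hp (hW₁.prod hW₂ g₁ g₂) hf (fun z _ => mul_nonneg
    (outDist_nonneg (hp.mapDist g₁).1 hW₁.1 z.1) (outDist_nonneg (hp.mapDist g₂).1 hW₂.1 z.2))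
    ?_ ?_
  · rw [sum_product, ← sum_mul_sum, sum_outDist (hp.mapDist g₁) hW₁,
      sum_outDist (hp.mapDist g₂) hW₂, one_mul]
  · intro x z _ h
    rcases mul_eq_zero.1 h with h | h
    · have h₁ := (mul_le_outDist_mapDist hp.1 hW₁.1 g₁ x z.1).trans h.le
      rw [← mul_assoc, h₁.antisymm (mul_nonneg (hp.1 x) (hW₁.1 _ _)), zero_mul]
    · have h₂ := (mul_le_outDist_mapDist hp.1 hW₂.1 g₂ x z.2).trans h.le
      rw [mul_left_comm, h₂.antisymm (mul_nonneg (hp.1 x) (hW₂.1 _ _)), mul_zero]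

end Product

section Deletion

lemma mem_listsUpTo {n : ℕ} {l : List Bool} : l ∈ listsUpTo n ↔ l.length ≤ n := by
  simp only [listsUpTo, mem_biUnion, mem_range, mem_image, mem_univ, true_and]
  constructor
  · rintro ⟨k, hk, v, rfl⟩
    rw [List.length_ofFn]
    omega
  · exact fun h => ⟨l.length, by omega, l.get, List.ofFn_get l⟩

lemma delOutput_mem_listsUpTo {n : ℕ} (x : Fin n → Bool) (S : Finset (Fin n)) :
    delOutput x S ∈ listsUpTo n := by
  simpa [mem_listsUpTo, delOutput] using card_le_univ S

lemma isChannel_Wdel (n : ℕ) {d : ℝ} (hd₀ : 0 ≤ d) (hd₁ : d ≤ 1) :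
    IsChannel (Wdel n d) (listsUpTo n) := by
  refine ⟨fun x y => sum_nonneg fun S _ => ?_, fun x => ?_⟩
  · have : 0 ≤ 1 - d := by linarith
    split_ifs <;> positivity
  · simp only [Wdel]
    rw [sum_comm]
    simp only [sum_ite_eq, delOutput_mem_listsUpTo, if_true]
    simpa using sum_pow_mul_eq_add_pow (1 - d) d (univ : Finset (Fin n))

variable {a b : ℕ}

def finsetFinAddEquiv (a b : ℕ) : Finset (Fin a) × Finset (Fin b) ≃ Finset (Fin (a + b)) :=
  Finset.sumEquiv.symm.toEquiv.trans finSumFinEquiv.finsetCongr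

lemma sort_finsetFinAddEquiv (S₁ : Finset (Fin a)) (S₂ : Finset (Fin b)) :
    (finsetFinAddEquiv a b (S₁, S₂)).sort (· ≤ ·) =
      (S₁.sort (· ≤ ·)).map (Fin.castAdd b) ++ (S₂.sort (· ≤ ·)).map (Fin.natAdd a) := by
  have hl : ((S₁.sort (· ≤ ·)).map (Fin.castAdd b) ++
      (S₂.sort (· ≤ ·)).map (Fin.natAdd a)).Pairwise (· < ·) := by
    refine List.pairwise_append.2 ⟨(sortedLT_sort S₁).pairwise.map _ (Fin.strictMono_castAdd b),
      (sortedLT_sort S₂).pairwise.map _ (Fin.strictMono_natAdd a), ?_⟩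
    simp only [List.mem_map]
    rintro _ ⟨i, -, rfl⟩ _ ⟨j, -, rfl⟩
    simp only [Fin.lt_def, Fin.val_castAdd, Fin.val_natAdd]
    omega
  rw [← (List.toFinset_sort _ hl.nodup).2 (hl.imp le_of_lt)]
  have hne : ∀ (i : Fin a) (j : Fin b), Fin.castAdd b i ≠ Fin.natAdd a j := fun i j h => by
    have := congrArg Fin.val h
    simp only [Fin.val_castAdd, Fin.val_natAdd] at this
    omega
  congr 1
  ext i
  refine Fin.addCases (fun j => ?_) (fun j => ?_) i <;>
    simp [finsetFinAddEquiv, hne, (hne _ _).symm]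

lemma delOutput_finsetFinAddEquiv (x : Fin (a + b) → Bool) (S₁ : Finset (Fin a))
    (S₂ : Finset (Fin b)) :
    delOutput x (finsetFinAddEquiv a b (S₁, S₂)) =
      delOutput (x ∘ Fin.castAdd b) S₁ ++ delOutput (x ∘ Fin.natAdd a) S₂ := by
  rw [delOutput, sort_finsetFinAddEquiv, List.map_append, List.map_map, List.map_map]
  rfl

lemma card_finsetFinAddEquiv (S₁ : Finset (Fin a)) (S₂ : Finset (Fin b)) :
    #(finsetFinAddEquiv a b (S₁, S₂)) = #S₁ + #S₂ := by
  rw [← length_sort (· ≤ ·), sort_finsetFinAddEquiv]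
  simp

lemma Wdel_add (d : ℝ) (x : Fin (a + b) → Bool) (y : List Bool) :
    Wdel (a + b) d x y = ∑ z ∈ listsUpTo a ×ˢ listsUpTo b with z.1 ++ z.2 = y,
      Wdel a d (x ∘ Fin.castAdd b) z.1 * Wdel b d (x ∘ Fin.natAdd a) z.2 := by
  set w : ∀ n, Finset (Fin n) → ℝ := fun n S => (1 - d) ^ #S * d ^ (n - #S)
  set o : Finset (Fin a) × Finset (Fin b) → List Bool × List Bool :=
    fun S => (delOutput (x ∘ Fin.castAdd b) S.1, delOutput (x ∘ Fin.natAdd a) S.2)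
  have hw : ∀ S : Finset (Fin a) × Finset (Fin b),
      w (a + b) (finsetFinAddEquiv a b S) = w a S.1 * w b S.2 := by
    rintro ⟨S₁, S₂⟩
    have h₁ := card_le_univ S₁
    have h₂ := card_le_univ S₂
    simp only [Fintype.card_fin] at h₁ h₂
    simp only [w, card_finsetFinAddEquiv, show a + b - (#S₁ + #S₂) = (a - #S₁) + (b - #S₂) by omega,
      pow_add]
    ring
  have hfiber : ∀ z : List Bool × List Bool, ∑ S with o S = z, w a S.1 * w b S.2 =
      Wdel a d (x ∘ Fin.castAdd b) z.1 * Wdel b d (x ∘ Fin.natAdd a) z.2 := by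
    intro z
    simp only [Wdel]
    rw [← sum_filter, ← sum_filter, sum_mul_sum, ← sum_product', ← filter_product]
    exact sum_congr (by ext; simp [o, Prod.ext_iff]) fun _ _ => rfl
  calc Wdel (a + b) d x y = ∑ S with delOutput x S = y, w (a + b) S := (sum_filter _ _).symm
    _ = ∑ S with (o S).1 ++ (o S).2 = y, w a S.1 * w b S.2 := by
        refine (sum_equiv (finsetFinAddEquiv a b) (fun ⟨S₁, S₂⟩ => ?_)
          fun S _ => (hw S).symm).symm
        simp [o, delOutput_finsetFinAddEquiv]
    _ = ∑ S with o S ∈ {z ∈ listsUpTo a ×ˢ listsUpTo b | z.1 ++ z.2 = y},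
          w a S.1 * w b S.2 := by
        refine sum_congr (filter_congr fun S _ => ?_) fun _ _ => rfl
        simp [o, delOutput_mem_listsUpTo]
    _ = _ := by
        rw [← sum_fiberwise_eq_sum_filter]
        exact sum_congr rfl fun z _ => hfiber z

end Deletion

section Capacity

variable {d : ℝ}

lemma isDist_pi_single {α : Type*} [Fintype α] [DecidableEq α] (a : α) :
    IsDist (Pi.single a 1 : α → ℝ) :=
  ⟨fun x => by by_cases h : x = a <;> simp [h], by simp⟩

lemma MI_le_Cdel (hd₀ : 0 ≤ d) (hd₁ : d ≤ 1) {n : ℕ} {p : (Fin n → Bool) → ℝ} (hp : IsDist p) :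
    MI (fun x y => p x * Wdel n d x y) (listsUpTo n) ≤ Cdel n d := by
  refine le_csSup ⟨logb 2 #(listsUpTo n), ?_⟩ ⟨p, hp, rfl⟩
  rintro _ ⟨q, hq, rfl⟩
  exact MI_le_logb_card hq (isChannel_Wdel n hd₀ hd₁)

lemma subadditive_Cdel (hd₀ : 0 ≤ d) (hd₁ : d ≤ 1) : Subadditive fun n => Cdel n d := by
  intro a b
  refine csSup_le ⟨_, _, isDist_pi_single default, rfl⟩ ?_
  rintro _ ⟨p, hp, rfl⟩
  simp only [Wdel_add]
  refine (MI_le_add_of_fiberwise_prod hp (isChannel_Wdel a hd₀ hd₁) (isChannel_Wdel b hd₀ hd₁)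
    _ _ fun z hz => ?_).trans
    (add_le_add (MI_le_Cdel hd₀ hd₁ (hp.mapDist _)) (MI_le_Cdel hd₀ hd₁ (hp.mapDist _)))
  rw [mem_product, mem_listsUpTo, mem_listsUpTo] at hz
  rw [mem_listsUpTo, List.length_append]
  omega

end Capacity

/-- For every `d ∈ [0,1]`, if `C_m(d)/m → L` as `m → ∞`, then for
every integer `n ≥ 1` we have `L ≤ C_n(d)/n`. -/
theorem bdc_capacity_le_Cn_div_n (d : ℝ) (hd₀ : 0 ≤ d) (hd₁ : d ≤ 1) (L : ℝ)
    (hL : Filter.Tendsto (fun m : ℕ => Cdel m d / m) Filter.atTop (nhds L))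
    (n : ℕ) (hn : 1 ≤ n) :
    L ≤ Cdel n d / n :=
  (subadditive_Cdel hd₀ hd₁).le_div_of_tendsto hL (by omega)
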